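/- Let S be an additively divisible semiring (commutative) possessing a multiplicative identity 1. If 1 has finite order (there exist m, n ≥ 1 with m ≠ n and m·1 = n·1), then S is additively idempotent. -/

import Mathlib

/-!
Since `1` has finite additive order, the multiples of `1` are eventually periodic, so some
multiple `e = N·1` is additively idempotent. Divisibility writes every `a` as `N·b = b * e`,
and then `a + a = b * (e + e) = b * e = a`.
-/

/-- `nmul n a` is the `n`-fold sum `a + ⋯ + a` (for `n ≥ 1`; `nmul 0 a = a` is junk). -/
def nmul {S : Type*} [Add S] (n : ℕ) (a : S) : S :=
  Nat.rec a (fun _ b => b + a) (n - 1)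

section AddSemigroup

variable {S : Type*} [AddSemigroup S]

theorem nmul_succ {n : ℕ} (hn : 1 ≤ n) (a : S) : nmul (n + 1) a = nmul n a + a := by
  obtain ⟨k, rfl⟩ := Nat.exists_eq_add_of_le' hn
  rfl

theorem nmul_add {m n : ℕ} (hm : 1 ≤ m) (hn : 1 ≤ n) (a : S) :
    nmul (m + n) a = nmul m a + nmul n a := by
  induction n, hn using Nat.le_induction with
  | base => exact nmul_succ hm a
  | succ n hn ih => rw [← add_assoc, nmul_succ (by omega), ih, nmul_succ hn, add_assoc]

theorem nmul_add_mul_eq_of_nmul_add_eq {m k : ℕ} {a : S} (hm : 1 ≤ m)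
    (h : nmul (m + k) a = nmul m a) {j : ℕ} (hj : m ≤ j) (t : ℕ) :
    nmul (j + t * k) a = nmul j a := by
  have hstep : ∀ i, m ≤ i → nmul (i + k) a = nmul i a := by
    intro i hi
    obtain ⟨d, rfl⟩ := Nat.exists_eq_add_of_le hi
    rcases Nat.eq_zero_or_pos d with rfl | hd
    · simpa using h
    · rw [add_right_comm, nmul_add (by omega) hd, h, nmul_add hm hd]
  induction t with
  | zero => simp
  | succ t ih => rw [add_mul, one_mul, ← add_assoc, hstep _ (by omega), ih]

theorem exists_nmul_add_self_of_nmul_eq {m n : ℕ} {a : S} (hm : 1 ≤ m) (hn : 1 ≤ n)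
    (hmn : m ≠ n) (h : nmul m a = nmul n a) :
    ∃ N, 1 ≤ N ∧ nmul N a + nmul N a = nmul N a := by
  wlog hlt : m < n generalizing m n
  · exact this hn hm hmn.symm h.symm (by omega)
  obtain ⟨k, hk, rfl⟩ : ∃ k, 1 ≤ k ∧ n = m + k := ⟨n - m, by omega, by omega⟩
  -- `N = m * k` is past the preperiod `m` and a multiple of the period `k`.
  refine ⟨m * k, Nat.mul_pos hm hk, ?_⟩
  rw [← nmul_add (Nat.mul_pos hm hk) (Nat.mul_pos hm hk)]
  exact nmul_add_mul_eq_of_nmul_add_eq hm h.symm (Nat.le_mul_of_pos_right m hk) m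

end AddSemigroup

theorem mul_nmul {S : Type*} [Add S] [Mul S] (hdl : ∀ a b c : S, a * (b + c) = a * b + a * c)
    (n : ℕ) (a b : S) : a * nmul n b = nmul n (a * b) := by
  unfold nmul
  induction n - 1 with
  | zero => rfl
  | succ k ih => exact (hdl _ _ _).trans (congrArg (· + a * b) ih)

theorem stmt_13_general {S : Type*} [AddCommSemigroup S] [CommMonoid S]
    (hdl : ∀ a b c : S, a * (b + c) = a * b + a * c)
    (hdiv : ∀ a : S, ∀ n : ℕ, 1 ≤ n → ∃ b : S, nmul n b = a)
    (hone : ∃ m n : ℕ, 1 ≤ m ∧ 1 ≤ n ∧ m ≠ n ∧ nmul m (1 : S) = nmul n (1 : S)) :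
    ∀ a : S, a + a = a := by
  obtain ⟨m, n, hm, hn, hmn, h⟩ := hone
  obtain ⟨N, hN, he⟩ := exists_nmul_add_self_of_nmul_eq hm hn hmn h
  intro a
  obtain ⟨b, rfl⟩ := hdiv a N hN
  have hb : nmul N b = b * nmul N 1 := by rw [mul_nmul hdl, mul_one]
  rw [hb, ← hdl, he]

theorem stmt_13 {S : Type*} [AddCommSemigroup S] [CommMonoid S]
    (hdl : ∀ a b c : S, a * (b + c) = a * b + a * c)
    (hdr : ∀ a b c : S, (a + b) * c = a * c + b * c)
    (hdiv : ∀ a : S, ∀ n : ℕ, 1 ≤ n → ∃ b : S, nmul n b = a)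
    (hone : ∃ m n : ℕ, 1 ≤ m ∧ 1 ≤ n ∧ m ≠ n ∧ nmul m (1 : S) = nmul n (1 : S)) :
    ∀ a : S, a + a = a :=
  stmt_13_general hdl hdiv hone
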